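/- arXiv:1810.11759 — 3 statements merged into one kernel-verified Lean document; each statement's English description precedes it below -/
import Mathlib

section
/- Let N ≥ 1 be an integer, let ν be a nonzero finite Borel measure on ℝ^N, and let θ ∈ (0,1). Assume that ν(Ω)^θ · ν(ℝ^N)^{1-θ} ≤ ν(Ω) for every open set Ω ⊆ ℝ^N. Then ν is concentrated at a single point: there exists z ∈ ℝ^N such that ν = ν(ℝ^N) · δ_z, where δ_z is the Dirac measure at z. -/
/-!
Since `1 - θ > 0`, the hypothesis forces every open set to be null or of full measure. A point `z`
of the support of `ν` then has only conull open neighbourhoods, so by Hausdorff separation no other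
point lies in the support. As `ℝ^N` is hereditarily Lindelöf, the support is conull, whence `ν`
is carried by `{z}`.
-/

open MeasureTheory ENNReal

theorem ENNReal.eq_zero_or_eq_of_rpow_mul_rpow_le {a b : ℝ≥0∞} {θ : ℝ} (hab : a ≤ b)
    (hθ0 : 0 < θ) (hθ1 : θ < 1) (h : a ^ θ * b ^ (1 - θ) ≤ a) : a = 0 ∨ a = b := by
  by_contra! ⟨ha0, hab'⟩
  have hlt : a < b := lt_of_le_of_ne hab hab'
  have hatop : a ≠ ∞ := (hlt.trans_le le_top).ne
  have hapow0 : a ^ θ ≠ 0 := (ENNReal.rpow_pos (pos_iff_ne_zero.2 ha0) hatop).ne'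
  have hapowtop : a ^ θ ≠ ∞ := ENNReal.rpow_ne_top_of_nonneg hθ0.le hatop
  refine h.not_gt ?_
  calc a = a ^ θ * a ^ (1 - θ) := by rw [← ENNReal.rpow_add _ _ ha0 hatop]; norm_num
    _ < a ^ θ * b ^ (1 - θ) :=
      ENNReal.mul_lt_mul_right hapow0 hapowtop (ENNReal.rpow_lt_rpow hlt (by linarith))

namespace MeasureTheory.Measure

variable {X : Type*} [MeasurableSpace X]

theorem eq_smul_dirac_of_ae_eq {μ : Measure X} {z : X} (h : ∀ᵐ x ∂μ, x = z) :
    μ = μ Set.univ • dirac z := by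
  rw [← map_const, ← map_congr h, map_id']

variable [TopologicalSpace X] {μ : Measure X}

theorem support_subsingleton_of_isOpen_null_or_conull [T2Space X]
    (h : ∀ U : Set X, IsOpen U → μ U = 0 ∨ μ Uᶜ = 0) : μ.support.Subsingleton := by
  intro x hx y hy
  by_contra hxy
  obtain ⟨U, V, hU, hV, hxU, hyV, hUV⟩ := t2_separation hxy
  have hUpos := (mem_support_iff_forall x).1 hx U (hU.mem_nhds hxU)
  have hVpos := (mem_support_iff_forall y).1 hy V (hV.mem_nhds hyV)
  rcases h U hU with hU0 | hUc0
  · exact hUpos.ne' hU0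
  · exact hVpos.ne' (measure_mono_null hUV.subset_compl_left hUc0)

theorem exists_eq_smul_dirac_of_isOpen_null_or_conull [T2Space X] [HereditarilyLindelofSpace X]
    (hμ : μ ≠ 0) (h : ∀ U : Set X, IsOpen U → μ U = 0 ∨ μ Uᶜ = 0) :
    ∃ z, μ = μ Set.univ • dirac z := by
  obtain ⟨z, hz⟩ := nonempty_support hμ
  refine ⟨z, eq_smul_dirac_of_ae_eq ?_⟩
  filter_upwards [support_mem_ae] with x hx
  exact support_subsingleton_of_isOpen_null_or_conull h hx hz

end MeasureTheory.Measure

theorem measure_concentrated_at_point_general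
    (N : ℕ)
    (ν : Measure (EuclideanSpace ℝ (Fin N))) [IsFiniteMeasure ν] (hν : ν ≠ 0)
    (θ : ℝ) (hθ0 : 0 < θ) (hθ1 : θ < 1)
    (h : ∀ Ω : Set (EuclideanSpace ℝ (Fin N)), IsOpen Ω →
      ν Ω ^ θ * ν Set.univ ^ (1 - θ) ≤ ν Ω) :
    ∃ z : EuclideanSpace ℝ (Fin N), ν = ν Set.univ • Measure.dirac z := by
  refine Measure.exists_eq_smul_dirac_of_isOpen_null_or_conull hν fun Ω hΩ => ?_
  refine (ENNReal.eq_zero_or_eq_of_rpow_mul_rpow_le (measure_mono (Set.subset_univ Ω))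
    hθ0 hθ1 (h Ω hΩ)).imp_right fun hfull => ?_
  rw [measure_compl hΩ.measurableSet (measure_ne_top ν Ω), hfull, tsub_self]

/-- Let `ν` be a nonzero finite Borel measure on `ℝ^N` and `θ ∈ (0,1)`. If
`ν(Ω)^θ · ν(ℝ^N)^{1-θ} ≤ ν(Ω)` for every open set `Ω`, then `ν` is concentrated at a single
point: `ν = ν(ℝ^N) · δ_z` for some `z ∈ ℝ^N`. -/
theorem measure_concentrated_at_point
    (N : ℕ) (hN : 1 ≤ N)
    (ν : Measure (EuclideanSpace ℝ (Fin N))) [IsFiniteMeasure ν] (hν : ν ≠ 0)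
    (θ : ℝ) (hθ0 : 0 < θ) (hθ1 : θ < 1)
    (h : ∀ Ω : Set (EuclideanSpace ℝ (Fin N)), IsOpen Ω →
      ν Ω ^ θ * ν Set.univ ^ (1 - θ) ≤ ν Ω) :
    ∃ z : EuclideanSpace ℝ (Fin N), ν = ν Set.univ • Measure.dirac z :=
  measure_concentrated_at_point_general N ν hν θ hθ0 hθ1 h
end

section
/- Assume N ≥ 3 is an integer, α ≥ 0, 0 < μ < N, 0 < μ + 2α ≤ min{4, N}, and set q = 2*_{α,μ} := (2N-2α-μ)/(N-2). Let u : ℝ^N → ℝ be a nonnegative measurable function which is radially symmetric and radially nonincreasing (i.e. u(x) = U(|x|) for a nonincreasing function U : (0,∞) → [0,∞)), and assume ∫_{ℝ^N} ∫_{ℝ^N} u(x)^q u(y)^q / (|x|^α |x-y|^μ |y|^α) dx dy = 1. Then for every x ≠ 0, u(x) ≤ [ (N-α)^2 2^μ / ω_{N-1}^2 ]^{1/(2q)} · |x|^{-(N-2)/2}, where ω_{N-1} is the surface area of the unit sphere in ℝ^N. -/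
/-!
Fix `x₀ ≠ 0` and `R = ‖x₀‖`. On the punctured ball `B = B_R \ {0}` radial monotonicity gives
`u ≥ u(x₀)`, and `‖x - y‖ ≤ 2R` for `x, y ∈ B`. Writing `w(y) = u(y)^q ‖y‖^{-α}`, the energy
`∫∫ w(x) w(y) ‖x - y‖^{-μ}` is therefore at least
`(2R)^{-μ} u(x₀)^{2q} (∫_B ‖y‖^{-α})² = (2R)^{-μ} u(x₀)^{2q} (ω R^{N-α} / (N-α))²`,
and comparing with `1` rearranges to the claimed bound, since `(2N - 2α - μ) / (2q) = (N - 2) / 2`.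

The inner integrals are Bochner integrals, so the lower bound needs them to be finite. Since the
energy is nonzero, one of them is; and finiteness of `∫ w(y) ‖x - y‖^{-μ} dy` passes from one point
to every `x ≠ 0`, because `w` is bounded near `x` while away from `x` the kernel
`‖x - y‖^{-μ}` is dominated by a multiple of the kernel at the first point.
-/

open MeasureTheory Real Metric Set

lemma rpow_natSub_one_mul_rpow_neg {n : ℕ} (hn : 1 ≤ n) {s t : ℝ} (ht : 0 < t) :
    t ^ (n - 1) * t ^ (-s) = t ^ ((n : ℝ) - 1 - s) := by
  rw [← Real.rpow_natCast, Nat.cast_sub hn, ← Real.rpow_add ht]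
  push_cast
  ring_nf

lemma rpow_neg_le_mul_rpow_neg {a b M s : ℝ} (ha : 0 < a) (hM : 0 < M) (hs : 0 ≤ s)
    (hab : a ≤ M * b) : b ^ (-s) ≤ M ^ s * a ^ (-s) := by
  have haM : 0 < a / M := div_pos ha hM
  calc b ^ (-s) ≤ (a / M) ^ (-s) :=
        rpow_le_rpow_of_nonpos haM (by rwa [div_le_iff₀' hM]) (neg_nonpos.2 hs)
    _ = M ^ s * a ^ (-s) := by
        rw [div_rpow ha.le hM.le, rpow_neg hM.le, div_inv_eq_mul, mul_comm]

section NormedGroup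

variable {E : Type*} [NormedAddCommGroup E]

lemma indicator_punctured_closedBall_comp_norm (g : ℝ → ℝ) (R : ℝ) :
    (closedBall (0 : E) R \ {0}).indicator (fun z => g ‖z‖) =
      fun z => (Ioc 0 R).indicator g ‖z‖ := by
  ext z
  have hmem : z ∈ closedBall (0 : E) R \ {0} ↔ ‖z‖ ∈ Ioc 0 R := by
    simp [norm_pos_iff, and_comm]
  by_cases hz : ‖z‖ ∈ Ioc 0 R
  · rw [indicator_of_mem (hmem.2 hz), indicator_of_mem hz]
  · rw [indicator_of_notMem (mt hmem.1 hz), indicator_of_notMem hz]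

lemma norm_sub_le_mul_norm_sub_of_le {x₀ x y : E} {δ : ℝ} (hδ : 0 < δ) (hy : δ ≤ ‖x - y‖) :
    ‖x₀ - y‖ ≤ (‖x₀ - x‖ + δ) / δ * ‖x - y‖ := by
  have hratio : 1 ≤ ‖x - y‖ / δ := (one_le_div hδ).2 hy
  calc ‖x₀ - y‖ ≤ ‖x₀ - x‖ + ‖x - y‖ := norm_sub_le_norm_sub_add_norm_sub x₀ x y
    _ ≤ ‖x₀ - x‖ * (‖x - y‖ / δ) + ‖x - y‖ := by
        gcongr; exact le_mul_of_one_le_right (norm_nonneg _) hratio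
    _ = (‖x₀ - x‖ + δ) / δ * ‖x - y‖ := by field_simp

lemma rpow_mul_norm_rpow_neg_le_of_norm_le {u : E → ℝ} (hu : ∀ x, 0 ≤ u x)
    (hanti : ∀ y z : E, y ≠ 0 → ‖y‖ ≤ ‖z‖ → u z ≤ u y) {q α : ℝ} (hq : 0 ≤ q)
    (hα : 0 ≤ α) {y z : E} (hy : y ≠ 0) (hyz : ‖y‖ ≤ ‖z‖) :
    u z ^ q * ‖z‖ ^ (-α) ≤ u y ^ q * ‖y‖ ^ (-α) :=
  mul_le_mul (rpow_le_rpow (hu z) (hanti y z hy hyz) hq)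
    (rpow_le_rpow_of_nonpos (norm_pos_iff.2 hy) hyz (neg_nonpos.2 hα))
    (rpow_nonneg (norm_nonneg _) _) (rpow_nonneg (hu y) _)

variable [MeasurableSpace E] (μ : Measure E) [NullSingletonClass μ]

theorem rpow_neg_mul_sq_setIntegral_le_energy {w v : E → ℝ} {S : Set E} (hS : MeasurableSet S)
    {s d : ℝ} (hs : 0 ≤ s) (hdiam : ∀ x ∈ S, ∀ y ∈ S, ‖x - y‖ ≤ d) (hw : ∀ x, 0 ≤ w x)
    (hv : IntegrableOn v S μ) (hv₀ : ∀ x ∈ S, 0 ≤ v x) (hvw : ∀ x ∈ S, v x ≤ w x)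
    (hK : ∀ x ∈ S, Integrable (fun y => w y * ‖x - y‖ ^ (-s)) μ)
    (hE : Integrable (fun x => w x * ∫ y, w y * ‖x - y‖ ^ (-s) ∂μ) μ) :
    d ^ (-s) * (∫ x in S, v x ∂μ) ^ 2 ≤ ∫ x, w x * ∫ y, w y * ‖x - y‖ ^ (-s) ∂μ ∂μ := by
  set J := ∫ x in S, v x ∂μ
  have hJ : 0 ≤ J := setIntegral_nonneg hS hv₀
  have hd : ∀ x ∈ S, 0 ≤ d ^ (-s) := fun x hx =>
    rpow_nonneg ((norm_nonneg _).trans (hdiam x hx x hx)) _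
  have hpot : ∀ x ∈ S, d ^ (-s) * J ≤ ∫ y, w y * ‖x - y‖ ^ (-s) ∂μ := by
    intro x hx
    calc d ^ (-s) * J = ∫ y in S, v y * d ^ (-s) ∂μ := by rw [integral_mul_const, mul_comm]
      _ ≤ ∫ y in S, w y * ‖x - y‖ ^ (-s) ∂μ := by
          refine setIntegral_mono_ae_restrict (hv.mul_const _) (hK x hx).integrableOn ?_
          -- `y = x` is excluded because there `‖x - y‖ ^ (-s) = 0 ^ (-s) = 0`
          filter_upwards [ae_restrict_mem hS, ae_restrict_of_ae (μ.ae_ne x)] with y hy hyx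
          exact mul_le_mul (hvw y hy) (rpow_le_rpow_of_nonpos
            (norm_pos_iff.2 (sub_ne_zero.2 hyx.symm)) (hdiam x hx y hy) (neg_nonpos.2 hs))
            (hd x hx) (hw y)
      _ ≤ ∫ y, w y * ‖x - y‖ ^ (-s) ∂μ :=
          setIntegral_le_integral (hK x hx)
            (ae_of_all _ fun y => mul_nonneg (hw y) (rpow_nonneg (norm_nonneg _) _))
  calc d ^ (-s) * J ^ 2 = ∫ x in S, v x * (d ^ (-s) * J) ∂μ := by rw [integral_mul_const]; ring
    _ ≤ ∫ x in S, w x * ∫ y, w y * ‖x - y‖ ^ (-s) ∂μ ∂μ :=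
        setIntegral_mono_on (hv.mul_const _) hE.integrableOn hS fun x hx =>
          mul_le_mul (hvw x hx) (hpot x hx) (mul_nonneg (hd x hx) hJ) (hw x)
    _ ≤ ∫ x, w x * ∫ y, w y * ‖x - y‖ ^ (-s) ∂μ ∂μ :=
        setIntegral_le_integral hE (ae_of_all _ fun x => mul_nonneg (hw x)
          (integral_nonneg fun y => mul_nonneg (hw y) (rpow_nonneg (norm_nonneg _) _)))

end NormedGroup

section HaarMeasure

variable {E : Type*} [NormedAddCommGroup E] [NormedSpace ℝ E] [MeasurableSpace E] [BorelSpace E]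
  [FiniteDimensional ℝ E] [Nontrivial E] (μ : Measure E) [μ.IsAddHaarMeasure]

lemma toReal_toSphere_univ_pos : 0 < (μ.toSphere univ).toReal := by
  rw [Measure.toSphere_apply_univ, ENNReal.toReal_mul]
  exact mul_pos (by simpa using Module.finrank_pos)
    (ENNReal.toReal_pos (measure_ball_pos _ _ one_pos).ne' measure_ball_lt_top.ne)

lemma integrableOn_ball_norm_rpow_neg {s : ℝ} (hs : s < Module.finrank ℝ E) (r : ℝ) :
    IntegrableOn (fun z : E => ‖z‖ ^ (-s)) (ball 0 r) μ := by
  rw [integrableOn_fun_norm_addHaar μ (f := fun t : ℝ => t ^ (-s))]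
  rcases le_or_gt r 0 with hr | hr
  · simp [Ioo_eq_empty_of_le hr]
  refine ((intervalIntegral.integrableOn_Ioo_rpow_iff (s := (Module.finrank ℝ E : ℝ) - 1 - s)
    hr).2 (by linarith)).congr_fun (fun t ht => ?_) measurableSet_Ioo
  rw [smul_eq_mul, rpow_natSub_one_mul_rpow_neg Module.finrank_pos ht.1]

lemma setIntegral_punctured_closedBall_norm_rpow_neg {s : ℝ} (hs : s < Module.finrank ℝ E)
    {R : ℝ} (hR : 0 ≤ R) :
    ∫ z in closedBall (0 : E) R \ {0}, ‖z‖ ^ (-s) ∂μ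
      = (μ.toSphere univ).toReal * R ^ ((Module.finrank ℝ E : ℝ) - s) /
          (Module.finrank ℝ E - s) := by
  have radial : ∫ t in Ioi (0 : ℝ), t ^ (Module.finrank ℝ E - 1) • (Ioc 0 R).indicator (· ^ (-s)) t
      = R ^ ((Module.finrank ℝ E : ℝ) - s) / (Module.finrank ℝ E - s) := by
    have hcongr : EqOn (fun t => t ^ (Module.finrank ℝ E - 1) • (Ioc 0 R).indicator (· ^ (-s)) t)
        ((Ioc 0 R).indicator fun t => t ^ ((Module.finrank ℝ E : ℝ) - 1 - s)) (Ioi 0) := by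
      intro t ht
      by_cases htR : t ∈ Ioc 0 R
      · simp only [indicator_of_mem htR, smul_eq_mul,
          rpow_natSub_one_mul_rpow_neg Module.finrank_pos (mem_Ioi.1 ht)]
      · simp [indicator_of_notMem htR]
    rw [setIntegral_congr_fun measurableSet_Ioi hcongr, integral_indicator measurableSet_Ioc,
      Measure.restrict_restrict measurableSet_Ioc,
      inter_eq_self_of_subset_left Ioc_subset_Ioi_self, ← intervalIntegral.integral_of_le hR,
      integral_rpow (Or.inl (by linarith)), Real.zero_rpow (by linarith)]
    ring_nf
  rw [← integral_indicator (measurableSet_closedBall.diff (measurableSet_singleton 0)),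
    indicator_punctured_closedBall_comp_norm (fun t => t ^ (-s)), integral_fun_norm_addHaar,
    radial, Measure.toSphere_apply_univ]
  simp only [Measure.real, smul_eq_mul, nsmul_eq_mul, ENNReal.toReal_mul, ENNReal.toReal_natCast]
  ring

theorem integrable_mul_norm_sub_rpow_neg_of_integrable {f : E → ℝ} (hf : AEStronglyMeasurable f μ)
    {s : ℝ} (hs₀ : 0 ≤ s) (hs : s < Module.finrank ℝ E) {x₀ x : E}
    (h₀ : Integrable (fun y => f y * ‖x₀ - y‖ ^ (-s)) μ) {δ C : ℝ} (hδ : 0 < δ)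
    (hC : ∀ y ∈ ball x δ, ‖f y‖ ≤ C) :
    Integrable (fun y => f y * ‖x - y‖ ^ (-s)) μ := by
  have hmeas : AEStronglyMeasurable (fun y => f y * ‖x - y‖ ^ (-s)) μ :=
    hf.mul ((measurable_const.sub measurable_id).norm.pow_const _).aestronglyMeasurable
  rw [← integrableOn_univ, ← union_compl_self (ball x δ), integrableOn_union]
  constructor
  · have hφ : Integrable (fun y => (ball (0 : E) δ).indicator (fun z => ‖z‖ ^ (-s)) (x - y)) μ :=
      ((integrable_indicator_iff measurableSet_ball).2
        (integrableOn_ball_norm_rpow_neg μ hs δ)).comp_sub_left x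
    refine (hφ.const_mul C).integrableOn.mono' hmeas.restrict ?_
    filter_upwards [ae_restrict_mem measurableSet_ball] with y hy
    have hxy : x - y ∈ ball (0 : E) δ := by
      rwa [mem_ball_zero_iff, norm_sub_rev, ← dist_eq_norm]
    rw [indicator_of_mem hxy, norm_mul, norm_of_nonneg (rpow_nonneg (norm_nonneg _) _)]
    exact mul_le_mul_of_nonneg_right (hC y hy) (rpow_nonneg (norm_nonneg _) _)
  · set M := (‖x₀ - x‖ + δ) / δ
    have hM : 0 < M := by positivity
    refine Integrable.mono (h₀.const_mul (M ^ s)).integrableOn hmeas.restrict ?_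
    filter_upwards [ae_restrict_mem measurableSet_ball.compl,
      ae_restrict_of_ae (μ.ae_ne x₀)] with y hy hyx₀
    have hδy : δ ≤ ‖x - y‖ := by
      rwa [mem_compl_iff, mem_ball, not_lt, dist_eq_norm, norm_sub_rev] at hy
    have hkernel : ‖x - y‖ ^ (-s) ≤ M ^ s * ‖x₀ - y‖ ^ (-s) :=
      rpow_neg_le_mul_rpow_neg (norm_pos_iff.2 (sub_ne_zero.2 hyx₀.symm)) hM hs₀
        (norm_sub_le_mul_norm_sub_of_le hδ hδy)
    rw [norm_mul, norm_mul, norm_mul, norm_of_nonneg (rpow_nonneg (norm_nonneg _) _),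
      norm_of_nonneg (rpow_nonneg hM.le _), norm_of_nonneg (rpow_nonneg (norm_nonneg _) _),
      mul_left_comm]
    exact mul_le_mul_of_nonneg_left hkernel (norm_nonneg _)

variable {u : E → ℝ} {q α s : ℝ}

lemma integrable_radial_weight_mul_norm_sub_rpow_neg (hum : Measurable u) (hu : ∀ x, 0 ≤ u x)
    (hanti : ∀ y z : E, y ≠ 0 → ‖y‖ ≤ ‖z‖ → u z ≤ u y) (hq : 0 ≤ q) (hα : 0 ≤ α) (hs₀ : 0 ≤ s)
    (hs : s < Module.finrank ℝ E) {x₁ x : E}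
    (hx₁ : Integrable (fun y => u y ^ q * ‖y‖ ^ (-α) * ‖x₁ - y‖ ^ (-s)) μ) (hx : x ≠ 0) :
    Integrable (fun y => u y ^ q * ‖y‖ ^ (-α) * ‖x - y‖ ^ (-s)) μ := by
  have hw : Measurable fun y => u y ^ q * ‖y‖ ^ (-α) :=
    (hum.pow_const q).mul (measurable_norm.pow_const _)
  refine integrable_mul_norm_sub_rpow_neg_of_integrable μ hw.aestronglyMeasurable hs₀ hs hx₁
    (C := u ((2⁻¹ : ℝ) • x) ^ q * ‖(2⁻¹ : ℝ) • x‖ ^ (-α)) (half_pos (norm_pos_iff.2 hx))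
    fun y hy => ?_
  rw [norm_of_nonneg (mul_nonneg (rpow_nonneg (hu y) _) (rpow_nonneg (norm_nonneg _) _))]
  refine rpow_mul_norm_rpow_neg_le_of_norm_le hu hanti hq hα
    (smul_ne_zero (inv_ne_zero two_ne_zero) hx) ?_
  rw [mem_ball, dist_eq_norm] at hy
  rw [norm_smul, norm_inv, Real.norm_two]
  linarith [norm_sub_norm_le x y, norm_sub_rev x y]

lemma rpow_neg_mul_sq_le_energy_of_norm_antitone (hu : ∀ x, 0 ≤ u x)
    (hanti : ∀ y z : E, y ≠ 0 → ‖y‖ ≤ ‖z‖ → u z ≤ u y) (hq : 0 ≤ q)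
    (hαE : α < Module.finrank ℝ E) (hs : 0 ≤ s)
    (hK : ∀ x ≠ 0, Integrable (fun y => u y ^ q * ‖y‖ ^ (-α) * ‖x - y‖ ^ (-s)) μ)
    (hE : Integrable (fun x => u x ^ q * ‖x‖ ^ (-α) *
      ∫ y, u y ^ q * ‖y‖ ^ (-α) * ‖x - y‖ ^ (-s) ∂μ) μ) (x₀ : E) :
    (2 * ‖x₀‖) ^ (-s) * (u x₀ ^ q * ((μ.toSphere univ).toReal *
      ‖x₀‖ ^ ((Module.finrank ℝ E : ℝ) - α) / (Module.finrank ℝ E - α))) ^ 2 ≤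
    ∫ x, u x ^ q * ‖x‖ ^ (-α) * ∫ y, u y ^ q * ‖y‖ ^ (-α) * ‖x - y‖ ^ (-s) ∂μ ∂μ := by
  set R := ‖x₀‖
  have hdiam : ∀ x ∈ closedBall (0 : E) R \ {0}, ∀ y ∈ closedBall (0 : E) R \ {0},
      ‖x - y‖ ≤ 2 * R := fun x hx y hy => by
    linarith [norm_sub_le x y, mem_closedBall_zero_iff.1 hx.1, mem_closedBall_zero_iff.1 hy.1]
  have hv : IntegrableOn (fun y => u x₀ ^ q * ‖y‖ ^ (-α)) (closedBall (0 : E) R \ {0}) μ :=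
    ((integrableOn_ball_norm_rpow_neg μ hαE (R + 1)).mono_set
      (sdiff_subset.trans (closedBall_subset_ball (lt_add_one R)))).const_mul _
  have hvw : ∀ y ∈ closedBall (0 : E) R \ {0}, u x₀ ^ q * ‖y‖ ^ (-α) ≤ u y ^ q * ‖y‖ ^ (-α) :=
    fun y hy => mul_le_mul_of_nonneg_right (rpow_le_rpow (hu x₀)
      (hanti y x₀ hy.2 (mem_closedBall_zero_iff.1 hy.1)) hq) (rpow_nonneg (norm_nonneg _) _)
  have h := rpow_neg_mul_sq_setIntegral_le_energy μ
    (measurableSet_closedBall.diff (measurableSet_singleton 0)) hs hdiam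
    (fun y => mul_nonneg (rpow_nonneg (hu y) _) (rpow_nonneg (norm_nonneg _) _)) hv
    (fun y _ => mul_nonneg (rpow_nonneg (hu x₀) _) (rpow_nonneg (norm_nonneg _) _)) hvw
    (fun x hx => hK x hx.2) hE
  rwa [integral_const_mul, setIntegral_punctured_closedBall_norm_rpow_neg μ hαE (norm_nonneg _)]
    at h

end HaarMeasure

lemma exists_integrable_of_integral_mul_integral_ne_zero {X Y : Type*} [MeasurableSpace X]
    [MeasurableSpace Y] {μ : Measure X} {ν : Measure Y} {w : X → ℝ} {k : X → Y → ℝ}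
    (h : ∫ x, w x * ∫ y, k x y ∂ν ∂μ ≠ 0) : ∃ x, Integrable (k x) ν := by
  by_contra! hk
  simp [integral_undef (hk _)] at h

lemma le_of_rpow_neg_mul_sq_le_one {N α μ q ω R a : ℝ} (hN : 2 < N) (hαN : α < N)
    (hP : 0 < 2 * N - 2 * α - μ) (hq : q = (2 * N - 2 * α - μ) / (N - 2)) (ha : 0 ≤ a)
    (hR : 0 < R) (hω : 0 < ω)
    (h : (2 * R) ^ (-μ) * (a ^ q * (ω * R ^ (N - α) / (N - α))) ^ 2 ≤ 1) :
    a ≤ ((N - α) ^ (2 : ℕ) * 2 ^ μ / ω ^ (2 : ℕ)) ^ (1 / (2 * q)) * R ^ (-((N - 2) / 2)) := by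
  have hq0 : 0 < q := hq ▸ div_pos hP (by linarith)
  have hNα : 0 < N - α := by linarith
  set D := (N - α) ^ (2 : ℕ) * 2 ^ μ / ω ^ (2 : ℕ)
  have hsq : a ^ (2 * q) ≤ D * R ^ (μ + 2 * α - 2 * N) := by
    have hR' : R ^ (μ + 2 * α - 2 * N) = R ^ μ / (R ^ (N - α)) ^ 2 := by
      rw [← Real.rpow_natCast, ← Real.rpow_mul hR.le, ← Real.rpow_sub hR]
      ring_nf
    rw [rpow_neg (by positivity), mul_rpow zero_le_two hR.le,
      inv_mul_le_iff₀ (by positivity), mul_one] at h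
    rw [mul_comm 2 q, Real.rpow_mul ha, Real.rpow_two, hR']
    calc (a ^ q) ^ 2
        = (a ^ q * (ω * R ^ (N - α) / (N - α))) ^ 2 * ((N - α) ^ 2 / (ω * R ^ (N - α)) ^ 2) := by
          field_simp
      _ ≤ 2 ^ μ * R ^ μ * ((N - α) ^ 2 / (ω * R ^ (N - α)) ^ 2) := by gcongr
      _ = D * (R ^ μ / (R ^ (N - α)) ^ 2) := by ring
  have hqN : q * (N - 2) = 2 * N - 2 * α - μ := by
    rw [hq, div_mul_cancel₀ _ (by linarith)]
  calc a ≤ (D * R ^ (μ + 2 * α - 2 * N)) ^ (2 * q)⁻¹ :=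
        (Real.le_rpow_inv_iff_of_pos ha (by positivity) (by positivity)).2 hsq
    _ = D ^ (1 / (2 * q)) * R ^ (-((N - 2) / 2)) := by
        rw [Real.mul_rpow (by positivity) (by positivity), ← Real.rpow_mul hR.le, one_div]
        congr 2
        rw [mul_inv_eq_iff_eq_mul₀ (by positivity)]
        linear_combination hqN

theorem decay_estimate_radial_general
    (N : ℕ) (hN : 3 ≤ N) (α μ : ℝ)
    (hα : 0 ≤ α) (hμ0 : 0 < μ) (hμN : μ < (N : ℝ))
    (h2αμ4 : μ + 2 * α ≤ min 4 (N : ℝ))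
    (q : ℝ) (hq : q = (2 * N - 2 * α - μ) / ((N : ℝ) - 2))
    (u : EuclideanSpace ℝ (Fin N) → ℝ)
    (hum : Measurable u) (hupos : ∀ x, 0 ≤ u x)
    (U : ℝ → ℝ)
    (hUmono : ∀ r s : ℝ, 0 < r → r ≤ s → U s ≤ U r)
    (hrad : ∀ x : EuclideanSpace ℝ (Fin N), x ≠ 0 → u x = U ‖x‖)
    (hnorm : (∫ x, ∫ y, u x ^ q * u y ^ q / (‖x‖ ^ α * ‖x - y‖ ^ μ * ‖y‖ ^ α)) = 1)
    -- `ω` is the surface area of the unit sphere in `ℝ^N`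
    (ω : ℝ)
    (hω : ω = (((volume : Measure (EuclideanSpace ℝ (Fin N))).toSphere)
      (Set.univ : Set (Metric.sphere (0 : EuclideanSpace ℝ (Fin N)) 1))).toReal) :
    ∀ x : EuclideanSpace ℝ (Fin N), x ≠ 0 →
      u x ≤ (((N : ℝ) - α) ^ (2 : ℕ) * 2 ^ μ / ω ^ (2 : ℕ)) ^ (1 / (2 * q)) *
        ‖x‖ ^ (-(((N : ℝ) - 2) / 2)) := by
  intro x₀ hx₀
  have hfin : Module.finrank ℝ (EuclideanSpace ℝ (Fin N)) = N := finrank_euclideanSpace_fin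
  have : Nontrivial (EuclideanSpace ℝ (Fin N)) :=
    Module.nontrivial_of_finrank_pos (R := ℝ) (by omega)
  have hN2 : (2 : ℝ) < N := by exact_mod_cast hN
  have hμαN : μ + 2 * α ≤ N := h2αμ4.trans (min_le_right _ _)
  have hq0 : 0 < q := hq ▸ div_pos (by linarith) (by linarith)
  have hanti : ∀ y z : EuclideanSpace ℝ (Fin N), y ≠ 0 → ‖y‖ ≤ ‖z‖ → u z ≤ u y := by
    intro y z hy hyz
    rw [hrad y hy, hrad z (norm_pos_iff.1 ((norm_pos_iff.2 hy).trans_le hyz))]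
    exact hUmono _ _ (norm_pos_iff.2 hy) hyz
  have henergy : ∫ x, u x ^ q * ‖x‖ ^ (-α) *
      ∫ y, u y ^ q * ‖y‖ ^ (-α) * ‖x - y‖ ^ (-μ) = 1 := by
    simp_rw [← integral_const_mul, ← hnorm, Real.rpow_neg (norm_nonneg _)]
    congr 1 with x
    congr 1 with y
    ring
  have henergy_ne := ne_of_eq_of_ne henergy one_ne_zero
  obtain ⟨x₁, hx₁⟩ := exists_integrable_of_integral_mul_integral_ne_zero henergy_ne
  have hlower := rpow_neg_mul_sq_le_energy_of_norm_antitone volume hupos hanti hq0.le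
    (by rw [hfin]; linarith) hμ0.le
    (fun x hx => integrable_radial_weight_mul_norm_sub_rpow_neg volume hum hupos hanti hq0.le hα
      hμ0.le (by rwa [hfin]) hx₁ hx)
    (Integrable.of_integral_ne_zero henergy_ne) x₀
  rw [henergy, hfin, ← hω] at hlower
  exact le_of_rpow_neg_mul_sq_le_one hN2 (by linarith) (by linarith) hq (hupos x₀)
    (norm_pos_iff.2 hx₀) (hω ▸ toReal_toSphere_univ_pos volume) hlower

/-- **Decay estimate for radial nonincreasing functions with unit weighted HLS energy.**
Assume `N ≥ 3`, `α ≥ 0`, `0 < μ < N`, `0 < μ + 2α ≤ min{4,N}`, `q = (2N-2α-μ)/(N-2)`. If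
`u ≥ 0` is measurable, radially symmetric and radially nonincreasing, and
`∫∫ u(x)^q u(y)^q/(|x|^α |x-y|^μ |y|^α) dx dy = 1`, then for every `x ≠ 0`,
`u(x) ≤ [(N-α)^2 2^μ / ω_{N-1}^2]^{1/(2q)} |x|^{-(N-2)/2}`, where `ω_{N-1}` is the surface
area of the unit sphere in `ℝ^N`. -/
theorem decay_estimate_radial
    (N : ℕ) (hN : 3 ≤ N) (α μ : ℝ)
    (hα : 0 ≤ α) (hμ0 : 0 < μ) (hμN : μ < (N : ℝ))
    (h2αμ0 : 0 < μ + 2 * α) (h2αμ4 : μ + 2 * α ≤ min 4 (N : ℝ))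
    (q : ℝ) (hq : q = (2 * N - 2 * α - μ) / ((N : ℝ) - 2))
    (u : EuclideanSpace ℝ (Fin N) → ℝ)
    (hum : Measurable u) (hupos : ∀ x, 0 ≤ u x)
    (U : ℝ → ℝ)
    (hU0 : ∀ r : ℝ, 0 < r → 0 ≤ U r)
    (hUmono : ∀ r s : ℝ, 0 < r → r ≤ s → U s ≤ U r)
    (hrad : ∀ x : EuclideanSpace ℝ (Fin N), x ≠ 0 → u x = U ‖x‖)
    (hnorm : (∫ x, ∫ y, u x ^ q * u y ^ q / (‖x‖ ^ α * ‖x - y‖ ^ μ * ‖y‖ ^ α)) = 1)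
    -- `ω` is the surface area of the unit sphere in `ℝ^N`
    (ω : ℝ)
    (hω : ω = (((volume : Measure (EuclideanSpace ℝ (Fin N))).toSphere)
      (Set.univ : Set (Metric.sphere (0 : EuclideanSpace ℝ (Fin N)) 1))).toReal) :
    ∀ x : EuclideanSpace ℝ (Fin N), x ≠ 0 →
      u x ≤ (((N : ℝ) - α) ^ (2 : ℕ) * 2 ^ μ / ω ^ (2 : ℕ)) ^ (1 / (2 * q)) *
        ‖x‖ ^ (-(((N : ℝ) - 2) / 2)) :=
  decay_estimate_radial_general N hN α μ hα hμ0 hμN h2αμ4 q hq u hum hupos U hUmono hrad hnorm ω hω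
end

section
/- Assume N ≥ 3 is an integer, α ≥ 0, 0 < μ < N and p > 1. Let (u,v) be a pair of positive solutions of the subcritical Bessel integral system whose defining identities hold for every x (with x ≠ 0 for the second equation) with convergent integrals. Then for every λ ∈ ℝ and every such x: u(x) − u(x^λ) = ∫_{Σ_λ} [ g_2(x-y) − g_2(x^λ-y) ] · [ v(y) u(y)^{p-1} − v(y^λ) u(y^λ)^{p-1} ] dy, and v(x) − v(x^λ) = ∫_{Σ_λ} { (1/|x-y|^μ) ( u(y)^p/(|x|^α |y|^α) − u(y^λ)^p/(|x^λ|^α |y^λ|^α) ) + (1/|x^λ-y|^μ) ( u(y^λ)^p/(|x|^α |y^λ|^α) − u(y)^p/(|x^λ|^α |y|^α) ) } dy. -/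
/-!
The reflection `x ↦ x^λ` is a measure-preserving involutive isometry mapping `Σ_λ` onto the
opposite open half-space, and the hyperplane `{x_1 = λ}` is null. Hence every integral over `ℝ^N`
equals the integral over `Σ_λ` of the integrand plus its reflected copy. Since the kernels depend
only on distances, `|x^λ - y^λ| = |x - y|` and `|x - y^λ| = |x^λ - y|`, so subtracting the split
integrals for `x` and for `x^λ` and regrouping gives both identities.
-/

open MeasureTheory Real
open scoped RealInnerProductSpace

section Splitting

variable {α G : Type*} [MeasurableSpace α] {μ : Measure α}
  [NormedAddCommGroup G] [NormedSpace ℝ G]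
  {σ : α → α} {S : Set α}

theorem integral_eq_setIntegral_add_comp_of_involutive (hσ : MeasurePreserving σ μ μ)
    (hinv : Function.Involutive σ) (hS : MeasurableSet S) (hSσ : σ ⁻¹' S =ᵐ[μ] Sᶜ)
    {f : α → G} (hf : Integrable f μ) :
    ∫ y, f y ∂μ = ∫ y in S, (f y + f (σ y)) ∂μ := by
  have hemb : MeasurableEmbedding σ :=
    (MeasurableEquiv.ofInvolutive σ hinv hσ.measurable).measurableEmbedding
  have hfσ : Integrable (f ∘ σ) μ := (hσ.integrable_comp_emb hemb).mpr hf
  have hcompl : ∫ y in Sᶜ, f y ∂μ = ∫ y in S, f (σ y) ∂μ := by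
    calc ∫ y in Sᶜ, f y ∂μ = ∫ y in σ ⁻¹' S, f (σ (σ y)) ∂μ := by
          simp only [hinv _]; exact setIntegral_congr_set hSσ.symm
      _ = ∫ y in S, f (σ y) ∂μ := hσ.setIntegral_preimage_emb hemb (f ∘ σ) S
  rw [← integral_add_compl hS hf, hcompl]
  exact (integral_add hf.integrableOn hfσ.integrableOn).symm

theorem integral_sub_integral_eq_setIntegral_of_involutive (hσ : MeasurePreserving σ μ μ)
    (hinv : Function.Involutive σ) (hS : MeasurableSet S) (hSσ : σ ⁻¹' S =ᵐ[μ] Sᶜ)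
    {f g : α → G} (hf : Integrable f μ) (hg : Integrable g μ) :
    ∫ y, f y ∂μ - ∫ y, g y ∂μ = ∫ y in S, (f y + f (σ y) - (g y + g (σ y))) ∂μ := by
  have hemb : MeasurableEmbedding σ :=
    (MeasurableEquiv.ofInvolutive σ hinv hσ.measurable).measurableEmbedding
  rw [integral_eq_setIntegral_add_comp_of_involutive hσ hinv hS hSσ hf,
    integral_eq_setIntegral_add_comp_of_involutive hσ hinv hS hSσ hg, ← integral_sub]
  · exact (hf.add ((hσ.integrable_comp_emb hemb).mpr hf)).integrableOn
  · exact (hg.add ((hσ.integrable_comp_emb hemb).mpr hg)).integrableOn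

end Splitting

section HyperplaneReflection

variable {E : Type*} [NormedAddCommGroup E] [InnerProductSpace ℝ E] {e : E}

/-- The reflection across the affine hyperplane `{x | ⟪e, x⟫ = l}`, for a unit vector `e`. -/
def hyperplaneReflection (e : E) (l : ℝ) (x : E) : E := x + (2 * l - 2 * ⟪e, x⟫) • e

theorem inner_hyperplaneReflection (he : ‖e‖ = 1) (l : ℝ) (x : E) :
    ⟪e, hyperplaneReflection e l x⟫ = 2 * l - ⟪e, x⟫ := by
  rw [hyperplaneReflection, inner_add_right, inner_smul_right, real_inner_self_eq_norm_sq, he]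
  ring

theorem hyperplaneReflection_involutive (he : ‖e‖ = 1) (l : ℝ) :
    Function.Involutive (hyperplaneReflection e l) := by
  intro x
  rw [hyperplaneReflection, inner_hyperplaneReflection he, hyperplaneReflection]
  module

theorem hyperplaneReflection_eq_reflection_add (he : ‖e‖ = 1) (l : ℝ) (x : E) :
    hyperplaneReflection e l x = (ℝ ∙ e)ᗮ.reflection x + (2 * l) • e := by
  rw [Submodule.reflection_orthogonal_apply, Submodule.reflection_singleton_apply, he,
    hyperplaneReflection]
  simp only [RCLike.ofReal_real_eq_id, id, one_pow, div_one]
  module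

theorem norm_hyperplaneReflection_sub (he : ‖e‖ = 1) (l : ℝ) (x y : E) :
    ‖hyperplaneReflection e l x - hyperplaneReflection e l y‖ = ‖x - y‖ := by
  rw [hyperplaneReflection_eq_reflection_add he, hyperplaneReflection_eq_reflection_add he,
    add_sub_add_right_eq_sub, ← map_sub, LinearIsometryEquiv.norm_map]

theorem norm_hyperplaneReflection_sub_comm (he : ‖e‖ = 1) (l : ℝ) (x y : E) :
    ‖hyperplaneReflection e l x - y‖ = ‖x - hyperplaneReflection e l y‖ := by
  conv_lhs => rw [← hyperplaneReflection_involutive he l y]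
  exact norm_hyperplaneReflection_sub he l _ _

variable [MeasurableSpace E] [BorelSpace E] [FiniteDimensional ℝ E]

theorem measurePreserving_hyperplaneReflection (he : ‖e‖ = 1) (l : ℝ) :
    MeasurePreserving (hyperplaneReflection e l) := by
  rw [show hyperplaneReflection e l = _ from funext (hyperplaneReflection_eq_reflection_add he l)]
  exact (measurePreserving_add_right volume ((2 * l) • e)).comp
    (ℝ ∙ e)ᗮ.reflection.measurePreserving

theorem volume_setOf_inner_eq (he : ‖e‖ = 1) (l : ℝ) : volume {x : E | ⟪e, x⟫ = l} = 0 := by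
  have hne : (ℝ ∙ e)ᗮ ≠ ⊤ := fun h => by
    have : e ∈ (ℝ ∙ e)ᗮ := h ▸ Submodule.mem_top
    rw [Submodule.mem_orthogonal_singleton_iff_inner_right, real_inner_self_eq_norm_sq, he]
      at this
    norm_num at this
  have hset : {x : E | ⟪e, x⟫ = l} = (· + -(l • e)) ⁻¹' ((ℝ ∙ e)ᗮ : Set E) := by
    ext x
    simp only [Set.mem_ofPred_eq, Set.mem_preimage, SetLike.mem_coe,
      Submodule.mem_orthogonal_singleton_iff_inner_right, inner_add_right, inner_neg_right,
      inner_smul_right, real_inner_self_eq_norm_sq, he]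
    constructor <;> intro h <;> linarith
  rw [hset, measure_preimage_add_right]
  exact Measure.addHaar_submodule volume _ hne

theorem preimage_hyperplaneReflection_halfSpace_ae_eq (he : ‖e‖ = 1) (l : ℝ) :
    hyperplaneReflection e l ⁻¹' {y | ⟪e, y⟫ < l} =ᵐ[volume] {y | ⟪e, y⟫ < l}ᶜ := by
  have hpre : hyperplaneReflection e l ⁻¹' {y | ⟪e, y⟫ < l} = {y | l < ⟪e, y⟫} := by
    ext y
    simp only [Set.mem_preimage, Set.mem_ofPred_eq, inner_hyperplaneReflection he]
    constructor <;> intro h <;> linarith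
  rw [hpre]
  refine ae_eq_set.mpr ⟨measure_mono_null (fun y hy => ?_) (volume_setOf_inner_eq he l),
    measure_mono_null (fun y hy => ?_) (volume_setOf_inner_eq he l)⟩
  · obtain ⟨hlt : l < ⟪e, y⟫, hge : ¬¬⟪e, y⟫ < l⟩ := hy
    exact absurd (not_not.mp hge) hlt.not_gt
  · obtain ⟨hge : ¬⟪e, y⟫ < l, hle : ¬l < ⟪e, y⟫⟩ := hy
    exact le_antisymm (not_lt.mp hle) (not_lt.mp hge)

theorem integral_sub_integral_eq_setIntegral_halfSpace (he : ‖e‖ = 1) (l : ℝ) {G : Type*}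
    [NormedAddCommGroup G] [NormedSpace ℝ G] {f g : E → G} (hf : Integrable f) (hg : Integrable g) :
    (∫ y, f y) - ∫ y, g y = ∫ y in {y | ⟪e, y⟫ < l},
      (f y + f (hyperplaneReflection e l y) - (g y + g (hyperplaneReflection e l y))) :=
  integral_sub_integral_eq_setIntegral_of_involutive (measurePreserving_hyperplaneReflection he l)
    (hyperplaneReflection_involutive he l)
    (measurableSet_lt (measurable_const.inner measurable_id) measurable_const)
    (preimage_hyperplaneReflection_halfSpace_ae_eq he l) hf hg

end HyperplaneReflection

/-- **Reflection difference identities for the subcritical Bessel integral system**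
`u(x) = ∫ g₂(x-y) v(y) u(y)^{p-1} dy`, `v(x) = ∫ u(y)^p/(|x|^α |x-y|^μ |y|^α) dy`, where
`g₂` is the Bessel kernel of order 2. With `x^λ` the reflection across `{x_1 = λ}` and
`Σ_λ = {x : x_1 < λ}`, one has for all `λ` and `x`:
`u(x) − u(x^λ) = ∫_{Σ_λ} [g₂(x-y) − g₂(x^λ-y)][v(y)u(y)^{p-1} − v(y^λ)u(y^λ)^{p-1}] dy` and
(for `x, x^λ ≠ 0`) the corresponding identity for `v(x) − v(x^λ)`. -/
theorem bessel_system_reflection_identities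
    (N : ℕ) (hN : 3 ≤ N) (α μ p : ℝ)
    -- `g2` is the Bessel kernel of order 2
    (g2 : EuclideanSpace ℝ (Fin N) → ℝ)
    (hg2 : ∀ x, g2 x = (4 * π) ^ (-(N : ℝ) / 2) *
      ∫ t in Set.Ioi (0 : ℝ),
        Real.exp (-(π * ‖x‖ ^ (2 : ℕ) / t) - t / (4 * π)) * t ^ (-((N : ℝ) - 2) / 2 - 1))
    (u v : EuclideanSpace ℝ (Fin N) → ℝ)
    (hint1 : ∀ x : EuclideanSpace ℝ (Fin N),
      Integrable (fun y => g2 (x - y) * v y * u y ^ (p - 1)) volume)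
    (heq1 : ∀ x : EuclideanSpace ℝ (Fin N),
      u x = ∫ y, g2 (x - y) * v y * u y ^ (p - 1))
    (hint2 : ∀ x : EuclideanSpace ℝ (Fin N), x ≠ 0 →
      Integrable (fun y => u y ^ p / (‖x‖ ^ α * ‖x - y‖ ^ μ * ‖y‖ ^ α)) volume)
    (heq2 : ∀ x : EuclideanSpace ℝ (Fin N), x ≠ 0 →
      v x = ∫ y, u y ^ p / (‖x‖ ^ α * ‖x - y‖ ^ μ * ‖y‖ ^ α))
    -- the reflection `x ↦ x^λ` across the hyperplane `{x : x_1 = λ}`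
    (refl : ℝ → EuclideanSpace ℝ (Fin N) → EuclideanSpace ℝ (Fin N))
    (hrefl : ∀ l x, refl l x =
      x + (2 * l - 2 * x ⟨0, by omega⟩) • EuclideanSpace.single (⟨0, by omega⟩ : Fin N) (1 : ℝ)) :
    ∀ l : ℝ, ∀ x : EuclideanSpace ℝ (Fin N),
      (u x - u (refl l x) =
        ∫ y in {y : EuclideanSpace ℝ (Fin N) | y ⟨0, by omega⟩ < l},
          (g2 (x - y) - g2 (refl l x - y)) *
          (v y * u y ^ (p - 1) - v (refl l y) * u (refl l y) ^ (p - 1))) ∧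
      (x ≠ 0 → refl l x ≠ 0 →
        v x - v (refl l x) =
          ∫ y in {y : EuclideanSpace ℝ (Fin N) | y ⟨0, by omega⟩ < l},
            (1 / ‖x - y‖ ^ μ) *
              (u y ^ p / (‖x‖ ^ α * ‖y‖ ^ α) -
                u (refl l y) ^ p / (‖refl l x‖ ^ α * ‖refl l y‖ ^ α)) +
            (1 / ‖refl l x - y‖ ^ μ) *
              (u (refl l y) ^ p / (‖x‖ ^ α * ‖refl l y‖ ^ α) -
                u y ^ p / (‖refl l x‖ ^ α * ‖y‖ ^ α))) := by
  intro l x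
  set e := EuclideanSpace.single (⟨0, by omega⟩ : Fin N) (1 : ℝ)
  have he : ‖e‖ = 1 := by simp [e]
  have hinner : ∀ y, ⟪e, y⟫ = y ⟨0, by omega⟩ := fun y => by
    simp [e, EuclideanSpace.inner_single_left]
  obtain rfl : refl = hyperplaneReflection e := by
    ext1 l; ext1 x; rw [hrefl, hyperplaneReflection, hinner]
  simp only [← hinner]
  have hg2_radial : ∀ a b, ‖a‖ = ‖b‖ → g2 a = g2 b := fun a b h => by rw [hg2, hg2, h]
  have hS : MeasurableSet {y | ⟪e, y⟫ < l} :=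
    measurableSet_lt (measurable_const.inner measurable_id) measurable_const
  refine ⟨?_, fun hx hσx => ?_⟩
  · rw [heq1 x, heq1, integral_sub_integral_eq_setIntegral_halfSpace he l (hint1 _) (hint1 _)]
    refine setIntegral_congr_fun hS fun y _ => ?_
    rw [hg2_radial _ _ (norm_hyperplaneReflection_sub_comm he l x y).symm,
      hg2_radial _ _ (norm_hyperplaneReflection_sub he l x y)]
    ring
  · rw [heq2 x hx, heq2 _ hσx,
      integral_sub_integral_eq_setIntegral_halfSpace he l (hint2 _ hx) (hint2 _ hσx)]
    refine setIntegral_congr_fun hS fun y _ => ?_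
    rw [← norm_hyperplaneReflection_sub_comm he l x y, norm_hyperplaneReflection_sub he l x y]
    ring
end
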